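/- Let V = Aug(ℂ^n) be the augmentation submodule of the natural ℂ[T_n]-module ℂ^n. For each 1 ≤ r ≤ n there is a short exact sequence of ℂ[T_n]-modules 0 → Λ^r(V) → Λ^r(ℂ^n) → Λ^{r-1}(V) → 0. -/

import Mathlib

open Finset in
/-- The natural representation of the full transformation monoid `Function.End (Fin n)`
on `ℂ^n`, determined by `f · v_i = v_{f i}` on the standard basis. -/
noncomputable def natRep (n : ℕ) :
    Representation ℂ (Function.End (Fin n)) (Fin n → ℂ) where
  toFun f :=
    { toFun := fun x j => ∑ i, if f i = j then x i else 0
      map_add' := by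
        intro x y
        funext j
        simp only [Pi.add_apply]
        rw [← Finset.sum_add_distrib]
        congr 1; funext i; split <;> simp
      map_smul' := by
        intro c x
        funext j
        simp [Finset.mul_sum, apply_ite (fun t => c * t)] }
  map_one' := by
    refine LinearMap.ext fun x => funext fun j => ?_
    show (∑ i, if (1 : Function.End (Fin n)) i = j then x i else 0) = x j
    have h : ∀ i : Fin n, (1 : Function.End (Fin n)) i = i := fun _ => rfl
    simp only [h]
    rw [Finset.sum_ite_eq' Finset.univ j x]
    simp
  map_mul' := by
    intro f g
    refine LinearMap.ext fun x => funext fun j => ?_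
    show (∑ i, if f (g i) = j then x i else 0)
        = ∑ k, if f k = j then ∑ i, if g i = k then x i else 0 else 0
    have key : ∀ k, (if f k = j then ∑ i, if g i = k then x i else 0 else 0)
        = ∑ i, if g i = k then (if f k = j then x i else 0) else 0 := by
      intro k; split
      · rfl
      · simp
    rw [Finset.sum_congr rfl (fun k _ => key k), Finset.sum_comm]
    refine Finset.sum_congr rfl fun i _ => ?_
    rw [Finset.sum_ite_eq Finset.univ (g i) (fun k => if f k = j then x i else 0)]
    simp

lemma sum_natRep (n : ℕ) (f : Function.End (Fin n)) (x : Fin n → ℂ) :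
    ∑ j, natRep n f x j = ∑ i, x i := by
  show ∑ j, ∑ i, (if f i = j then x i else 0) = _
  rw [Finset.sum_comm]
  simp [Finset.sum_ite_eq' Finset.univ]

/-- The augmentation submodule `Aug(ℂ^n)` of the natural module: vectors whose
coordinates sum to zero. -/
noncomputable def Aug (n : ℕ) : Submodule ℂ (Fin n → ℂ) where
  carrier := {x | ∑ i, x i = 0}
  add_mem' := by intro a b ha hb; simp_all [Finset.sum_add_distrib]
  zero_mem' := by simp
  smul_mem' := by intro c a ha; simp_all [← Finset.mul_sum]

lemma natRep_mem_aug (n : ℕ) (f : Function.End (Fin n)) {x : Fin n → ℂ}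
    (hx : x ∈ Aug n) : natRep n f x ∈ Aug n := by
  have : ∑ j, natRep n f x j = 0 := by rw [sum_natRep]; exact hx
  exact this

/-- The representation of the full transformation monoid on the augmentation submodule. -/
noncomputable def augRep (n : ℕ) : Representation ℂ (Function.End (Fin n)) (Aug n) where
  toFun f := (natRep n f).restrict (p := Aug n) (q := Aug n) (fun _ hx => natRep_mem_aug n f hx)
  map_one' := by
    refine LinearMap.ext fun x => Subtype.ext ?_
    simp [LinearMap.restrict_apply]
  map_mul' := by
    intro f g
    refine LinearMap.ext fun x => Subtype.ext ?_
    simp [LinearMap.restrict_apply]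

lemma extAlg_map_mem {R M N : Type} [CommRing R] [AddCommGroup M] [Module R M]
    [AddCommGroup N] [Module R N] (r : ℕ) (f : M →ₗ[R] N) {x : ExteriorAlgebra R M}
    (hx : x ∈ ⋀[R]^r M) : ExteriorAlgebra.map f x ∈ ⋀[R]^r N := by
  rw [← ExteriorAlgebra.ιMulti_span_fixedDegree] at hx ⊢
  induction hx using Submodule.span_induction with
  | mem y hy =>
      obtain ⟨v, rfl⟩ := hy
      rw [ExteriorAlgebra.map_apply_ιMulti]
      exact Submodule.subset_span ⟨f ∘ v, rfl⟩
  | zero => simp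
  | add y z _ _ hy hz => rw [map_add]; exact Submodule.add_mem _ hy hz
  | smul c y _ hy => rw [map_smul]; exact Submodule.smul_mem _ c hy

/-- The linear map between `r`-th exterior powers induced by a linear map. -/
noncomputable def extMap {R M N : Type} [CommRing R] [AddCommGroup M] [Module R M]
    [AddCommGroup N] [Module R N] (r : ℕ) (f : M →ₗ[R] N) :
    ⋀[R]^r M →ₗ[R] ⋀[R]^r N :=
  (ExteriorAlgebra.map f).toLinearMap.restrict (p := ⋀[R]^r M) (q := ⋀[R]^r N)
    (fun _ hx => extAlg_map_mem r f hx)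

/-- The representation of the full transformation monoid on the `r`-th exterior power
of the natural module, by the diagonal action on wedge products. -/
noncomputable def extRep (n r : ℕ) :
    Representation ℂ (Function.End (Fin n)) (⋀[ℂ]^r (Fin n → ℂ)) where
  toFun f := extMap r (natRep n f)
  map_one' := by
    refine LinearMap.ext fun x => Subtype.ext ?_
    simp [extMap, LinearMap.restrict_apply, map_one, Module.End.one_eq_id,
      ExteriorAlgebra.map_id]
  map_mul' := by
    intro f g
    refine LinearMap.ext fun x => Subtype.ext ?_
    simp only [extMap, LinearMap.restrict_apply, map_mul, Module.End.mul_eq_comp,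
      ← ExteriorAlgebra.map_comp_map]
    rfl

set_option synthInstance.maxHeartbeats 1000000 in
/-- The representation of the full transformation monoid on the `r`-th exterior power
of the augmentation submodule. -/
noncomputable def extAugRep (n r : ℕ) :
    Representation ℂ (Function.End (Fin n)) (⋀[ℂ]^r ↥(Aug n)) where
  toFun f := extMap r (augRep n f)
  map_one' := by
    refine LinearMap.ext fun x => Subtype.ext ?_
    simp [extMap, LinearMap.restrict_apply, map_one, Module.End.one_eq_id,
      ExteriorAlgebra.map_id]
  map_mul' := by
    intro f g
    refine LinearMap.ext fun x => Subtype.ext ?_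
    simp only [extMap, LinearMap.restrict_apply, map_mul, Module.End.mul_eq_comp,
      ← ExteriorAlgebra.map_comp_map]
    rfl

/-- The idempotent `e_m ∈ T_n` fixing the first `m` points and sending all other
points to the first point. -/
def eIdem (n m : ℕ) : Function.End (Fin n) :=
  fun i => if h : (i : ℕ) < m then i else ⟨0, i.pos⟩

/-- The embedding of the symmetric group `S_r` into `T_n` as the maximal subgroup
at the idempotent `eIdem n r` (elements `g` with `e g e = g` invertible in `e T_n e`). -/
def permEmbed (n r : ℕ) (hr : 1 ≤ r) (hrn : r ≤ n) (σ : Equiv.Perm (Fin r)) :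
    Function.End (Fin n) :=
  fun i => Fin.castLE hrn (σ (if hi : (i : ℕ) < r then ⟨i, hi⟩ else ⟨0, hr⟩))

/-- The idempotent `η = (1/r!) ∑_{g ∈ G} sgn(g|_{[r]}) g` of the monoid algebra,
where `G ≅ S_r` is the maximal subgroup at `eIdem n r`. -/
noncomputable def eta (n r : ℕ) (hr : 1 ≤ r) (hrn : r ≤ n) :
    MonoidAlgebra ℂ (Function.End (Fin n)) :=
  (r.factorial : ℂ)⁻¹ • ∑ σ : Equiv.Perm (Fin r),
    MonoidAlgebra.single (permEmbed n r hr hrn σ) ((Equiv.Perm.sign σ : ℤ) : ℂ)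

/-- A permutation of `Fin m`, viewed as an element of the transformation monoid. -/
def permToEnd (m : ℕ) : Equiv.Perm (Fin m) →* Function.End (Fin m) where
  toFun σ := ⇑σ
  map_one' := rfl
  map_mul' := fun _ _ => rfl

/-- The wedge product of a family of `r` vectors, as an element of the `r`-th
exterior power. -/
noncomputable def wedge {M : Type} [AddCommGroup M] [Module ℂ M] (r : ℕ) (v : Fin r → M) :
    ⋀[ℂ]^r M :=
  ⟨ExteriorAlgebra.ιMulti ℂ r v, ExteriorAlgebra.ιMulti_range ℂ r ⟨v, rfl⟩⟩

/-- The basis `w_1, …, w_n` of `ℂ^n`: `w_i = v_i - v_n` for `i < n` and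
`w_n = v_1 + ⋯ + v_n`. -/
noncomputable def wBasis (n : ℕ) : Fin n → (Fin n → ℂ) :=
  fun i => if h : (i : ℕ) < n - 1
    then Pi.single i 1 - Pi.single (⟨n - 1, by omega⟩ : Fin n) 1
    else ∑ j, Pi.single j 1

lemma wBasis_mem_aug (n : ℕ) (i : Fin n) (h : (i : ℕ) < n - 1) : wBasis n i ∈ Aug n := by
  show ∑ j, wBasis n i j = 0
  simp [wBasis, h, Finset.sum_sub_distrib, Finset.sum_pi_single]

/-- The vectors `w_i = v_i - v_n` (for `i < n`) as elements of the augmentation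
submodule; junk value `0` otherwise. -/
noncomputable def wAug (n : ℕ) : Fin n → ↥(Aug n) :=
  fun i => if h : (i : ℕ) < n - 1 then ⟨wBasis n i, wBasis_mem_aug n i h⟩ else 0

/-- The trivial representation of the full transformation monoid on `ℂ`. -/
noncomputable def trivRep (n : ℕ) : Representation ℂ (Function.End (Fin n)) ℂ := 1

/-- `projDimLE R M k` : the `R`-module `M` admits a projective resolution of length
at most `k`, i.e. has projective dimension at most `k`. -/
def projDimLE (R : Type) [Ring R] (M : Type) [AddCommMonoid M] [Module R M] (k : ℕ) : Prop :=
  ∃ (P : ℕ → ModuleCat.{0} R) (d : (i : ℕ) → (P (i + 1) →ₗ[R] P i)) (π : P 0 →ₗ[R] M),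
    (∀ i, Module.Projective R (P i)) ∧
    Function.Surjective π ∧
    LinearMap.ker π = LinearMap.range (d 0) ∧
    (∀ i, LinearMap.ker (d i) = LinearMap.range (d (i + 1))) ∧
    (∀ i, k < i → Subsingleton (P i))

/-- The sign character of `S_n`, extended by zero to all of `T_n`. -/
noncomputable def sgnExt (n : ℕ) (f : Function.End (Fin n)) : ℂ :=
  haveI : Decidable (Function.Bijective f) :=
    Fintype.decidableBijectiveFintype (α := Fin n) (β := Fin n) f
  if h : Function.Bijective f then ((Equiv.Perm.sign (Equiv.ofBijective f h) : ℤ) : ℂ) else 0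

/-!
Let `d` be the coordinate-sum functional, so that `V = ker d`, `d ∘ f = d` for every `f ∈ T_n`,
and `d u = 1` for `u = v_1`. Contraction with `d` is a natural degree `-1` map
`Λ^{k+1}(ℂ^n) → Λ^k(ℂ^n)` that kills `Λ^{k+1}(V)`. The retraction `p = id - u ⊗ d` of
`ℂ^n` onto `V` acts on the exterior algebra by the homotopy formula `Λp x = x - u ∧ (d ⌋ x)`.
Since `d ⌋ d ⌋ = 0`, contraction therefore lands in `Λ^k(V)`; its kernel is `Λ^{k+1}(V)`
(an `x` with `d ⌋ x = 0` equals `Λp x`), and `ω ↦ u ∧ ω` is a section of it on `Λ^k(V)`.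
Equivariance is naturality of contraction together with `d ∘ f = d`.
-/

open ExteriorAlgebra CliffordAlgebra

section Functoriality

variable {R M N : Type} [CommRing R] [AddCommGroup M] [Module R M] [AddCommGroup N] [Module R N]

lemma extMap_eq_exteriorPowerMap (r : ℕ) (f : M →ₗ[R] N) :
    extMap r f = exteriorPower.map r f :=
  exteriorPower.linearMap_ext <| AlternatingMap.ext fun v => Subtype.ext <| by
    rw [LinearMap.compAlternatingMap_apply, LinearMap.compAlternatingMap_apply,
      exteriorPower.map_apply_ιMulti, exteriorPower.ιMulti_apply_coe,
      ← ExteriorAlgebra.map_apply_ιMulti]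
    rfl

lemma exteriorPower.coe_map (k : ℕ) (f : M →ₗ[R] N) (x : ⋀[R]^k M) :
    (exteriorPower.map k f x : ExteriorAlgebra R N) = ExteriorAlgebra.map f x := by
  rw [← extMap_eq_exteriorPowerMap]; rfl

lemma exteriorPower.map_comp_restrict {P : Submodule R M} {Q : Submodule R N} (k : ℕ)
    (f : M →ₗ[R] N) (hf : ∀ x ∈ P, f x ∈ Q) :
    exteriorPower.map k Q.subtype ∘ₗ exteriorPower.map k (f.restrict hf)
      = exteriorPower.map k f ∘ₗ exteriorPower.map k P.subtype := by
  rw [← exteriorPower.map_comp, ← exteriorPower.map_comp]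
  rfl

lemma ExteriorAlgebra.contractLeft_map (f : M →ₗ[R] N) (d : Module.Dual R N)
    (x : ExteriorAlgebra R M) :
    contractLeft d (ExteriorAlgebra.map f x)
      = ExteriorAlgebra.map f (contractLeft (d ∘ₗ f) x) := by
  induction x using CliffordAlgebra.left_induction with
  | algebraMap r => simp [AlgHom.commutes, contractLeft_algebraMap]
  | add x y hx hy => simp [map_add, hx, hy]
  | ι_mul x m hx =>
      rw [map_mul, ExteriorAlgebra.map_apply_ι, contractLeft_ι_mul, contractLeft_ι_mul,
        map_sub, map_smul, map_mul, ExteriorAlgebra.map_apply_ι, hx, LinearMap.comp_apply]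

end Functoriality

section Contraction

variable {R M : Type} [CommRing R] [AddCommGroup M] [Module R M]

lemma ExteriorAlgebra.map_id_sub_smulRight (d : Module.Dual R M) (u : M)
    (x : ExteriorAlgebra R M) :
    ExteriorAlgebra.map (LinearMap.id - d.smulRight u) x = x - ι R u * contractLeft d x := by
  induction x using CliffordAlgebra.left_induction with
  | algebraMap r => simp [AlgHom.commutes, contractLeft_algebraMap]
  | add x y hx hy => rw [map_add, hx, hy, map_add, mul_add]; abel
  | ι_mul x m hx =>
      have hm : ι R m * (ι R u * contractLeft d x) = -(ι R u * (ι R m * contractLeft d x)) := by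
        rw [← mul_assoc, ← mul_assoc, ← neg_mul,
          eq_neg_of_add_eq_zero_left (ι_add_mul_swap m u)]
      have hu : ι R u * (ι R u * contractLeft d x) = 0 := by
        rw [← mul_assoc, ι_sq_zero, zero_mul]
      rw [map_mul, ExteriorAlgebra.map_apply_ι, hx, contractLeft_ι_mul, LinearMap.sub_apply,
        LinearMap.id_apply, LinearMap.smulRight_apply, map_sub, map_smul, sub_mul, mul_sub,
        mul_sub, mul_sub, hm, smul_mul_assoc, smul_mul_assoc, hu, smul_zero, mul_smul_comm]
      abel

lemma ExteriorAlgebra.ι_mul_mem_exteriorPower (u : M) {k : ℕ} {x : ExteriorAlgebra R M}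
    (hx : x ∈ ⋀[R]^k M) : ι R u * x ∈ ⋀[R]^(k + 1) M := by
  rw [exteriorPower, pow_succ']
  exact Submodule.mul_mem_mul (LinearMap.mem_range_self _ u) hx

lemma ExteriorAlgebra.contractLeft_mem_exteriorPower (d : Module.Dual R M) :
    ∀ (k : ℕ) {x : ExteriorAlgebra R M},
      x ∈ ⋀[R]^(k + 1) M → contractLeft d x ∈ ⋀[R]^k M
  | k, x, hx => by
    rw [← ιMulti_span_fixedDegree] at hx
    induction hx using Submodule.span_induction with
    | mem y hy =>
        obtain ⟨v, rfl⟩ := hy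
        rw [ιMulti_succ_apply, contractLeft_ι_mul]
        refine sub_mem (Submodule.smul_mem _ _ (ιMulti_range R k ⟨_, rfl⟩)) ?_
        cases k with
        | zero => simp [ιMulti_zero_apply, contractLeft_one]
        | succ j =>
            exact ι_mul_mem_exteriorPower _
              (contractLeft_mem_exteriorPower d j (ιMulti_range R _ ⟨_, rfl⟩))
    | zero => simp
    | add y z _ _ hy hz => rw [map_add]; exact add_mem hy hz
    | smul c y _ hy => rw [map_smul]; exact Submodule.smul_mem _ c hy

noncomputable def exteriorPower.contractLeft (d : Module.Dual R M) (k : ℕ) :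
    ⋀[R]^(k + 1) M →ₗ[R] ⋀[R]^k M :=
  (CliffordAlgebra.contractLeft d).restrict fun _ => contractLeft_mem_exteriorPower d k

lemma exteriorPower.coe_contractLeft (d : Module.Dual R M) (k : ℕ) (x : ⋀[R]^(k + 1) M) :
    (exteriorPower.contractLeft d k x : ExteriorAlgebra R M) = CliffordAlgebra.contractLeft d x :=
  rfl

end Contraction

section KernelOfFunctional

variable {R M : Type} [CommRing R] [AddCommGroup M] [Module R M] {V : Submodule R M}
  {d : Module.Dual R M} {u : M}

noncomputable def kerRetraction (hV : V = LinearMap.ker d) (hu : d u = 1) : M →ₗ[R] V :=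
  (LinearMap.id - d.smulRight u).codRestrict V fun x => by simp [hV, hu]

lemma subtype_comp_kerRetraction (hV : V = LinearMap.ker d) (hu : d u = 1) :
    V.subtype ∘ₗ kerRetraction hV hu = LinearMap.id - d.smulRight u :=
  rfl

lemma kerRetraction_comp_subtype (hV : V = LinearMap.ker d) (hu : d u = 1) :
    kerRetraction hV hu ∘ₗ V.subtype = LinearMap.id :=
  LinearMap.ext fun x => Subtype.ext <| show (x : M) - d x • u = x by
    rw [show d x = 0 from hV ▸ x.2, zero_smul, sub_zero]

lemma contractLeft_map_subtype (hV : V = LinearMap.ker d) (y : ExteriorAlgebra R V) :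
    contractLeft d (ExteriorAlgebra.map V.subtype y) = 0 := by
  have : d ∘ₗ V.subtype = 0 := LinearMap.ext fun x => hV ▸ x.2
  rw [contractLeft_map, this, map_zero, LinearMap.zero_apply, map_zero]

noncomputable def contractToKer (hV : V = LinearMap.ker d) (hu : d u = 1) (k : ℕ) :
    ⋀[R]^(k + 1) M →ₗ[R] ⋀[R]^k V :=
  exteriorPower.map k (kerRetraction hV hu) ∘ₗ exteriorPower.contractLeft d k

lemma coe_map_subtype_contractToKer (hV : V = LinearMap.ker d) (hu : d u = 1) (k : ℕ)
    (x : ⋀[R]^(k + 1) M) :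
    (exteriorPower.map k V.subtype (contractToKer hV hu k x) : ExteriorAlgebra R M)
      = contractLeft d x := by
  rw [contractToKer, LinearMap.comp_apply, ← LinearMap.comp_apply (exteriorPower.map k _),
    ← exteriorPower.map_comp, subtype_comp_kerRetraction, exteriorPower.coe_map,
    map_id_sub_smulRight, exteriorPower.coe_contractLeft, contractLeft_contractLeft, mul_zero,
    sub_zero]

lemma map_subtype_injective (hV : V = LinearMap.ker d) (hu : d u = 1) (k : ℕ) :
    Function.Injective (exteriorPower.map k V.subtype) :=
  exteriorPower.map_injective _ (kerRetraction_comp_subtype hV hu)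

lemma contractToKer_surjective (hV : V = LinearMap.ker d) (hu : d u = 1) (k : ℕ) :
    Function.Surjective (contractToKer hV hu k) := by
  intro ω
  set y := exteriorPower.map k V.subtype ω
  have hy : contractLeft d (y : ExteriorAlgebra R M) = 0 := by
    rw [exteriorPower.coe_map, contractLeft_map_subtype hV]
  refine ⟨⟨ι R u * y, ι_mul_mem_exteriorPower u y.2⟩,
    map_subtype_injective hV hu k (Subtype.ext ?_)⟩
  rw [coe_map_subtype_contractToKer, contractLeft_ι_mul, hy, mul_zero, sub_zero, hu, one_smul]

lemma range_map_subtype_eq_ker_contractToKer (hV : V = LinearMap.ker d) (hu : d u = 1) (k : ℕ) :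
    LinearMap.range (exteriorPower.map (k + 1) V.subtype)
      = LinearMap.ker (contractToKer hV hu k) := by
  refine le_antisymm ?_ fun x hx => ?_
  · rintro _ ⟨z, rfl⟩
    refine map_subtype_injective hV hu k (Subtype.ext ?_)
    rw [coe_map_subtype_contractToKer, exteriorPower.coe_map, contractLeft_map_subtype hV,
      map_zero, Submodule.coe_zero]
  · have hx : contractLeft d (x : ExteriorAlgebra R M) = 0 := by
      rw [← coe_map_subtype_contractToKer hV hu, LinearMap.mem_ker.mp hx, map_zero,
        Submodule.coe_zero]
    refine ⟨exteriorPower.map (k + 1) (kerRetraction hV hu) x, Subtype.ext ?_⟩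
    rw [← LinearMap.comp_apply, ← exteriorPower.map_comp, subtype_comp_kerRetraction,
      exteriorPower.coe_map, map_id_sub_smulRight, hx, mul_zero, sub_zero]

lemma contractToKer_comp_map (hV : V = LinearMap.ker d) (hu : d u = 1) (k : ℕ)
    (F : M →ₗ[R] M) (hF : ∀ x ∈ V, F x ∈ V) (hdF : d ∘ₗ F = d) :
    contractToKer hV hu k ∘ₗ exteriorPower.map (k + 1) F
      = exteriorPower.map k (F.restrict hF) ∘ₗ contractToKer hV hu k := by
  refine LinearMap.ext fun x => map_subtype_injective hV hu k (Subtype.ext ?_)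
  have hcomm :=
    LinearMap.congr_fun (exteriorPower.map_comp_restrict k F hF) (contractToKer hV hu k x)
  simp only [LinearMap.comp_apply] at hcomm ⊢
  rw [hcomm, coe_map_subtype_contractToKer, exteriorPower.coe_map k F,
    coe_map_subtype_contractToKer, exteriorPower.coe_map, contractLeft_map, hdF]

end KernelOfFunctional

noncomputable def sumFunctional (n : ℕ) : Module.Dual ℂ (Fin n → ℂ) :=
  ∑ i, LinearMap.proj i

lemma sumFunctional_apply (n : ℕ) (x : Fin n → ℂ) : sumFunctional n x = ∑ i, x i := by
  simp [sumFunctional]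

lemma aug_eq_ker_sumFunctional (n : ℕ) : Aug n = LinearMap.ker (sumFunctional n) :=
  Submodule.ext fun x => by rw [LinearMap.mem_ker, sumFunctional_apply]; rfl

lemma sumFunctional_comp_natRep (n : ℕ) (f : Function.End (Fin n)) :
    sumFunctional n ∘ₗ natRep n f = sumFunctional n :=
  LinearMap.ext fun x => by
    rw [LinearMap.comp_apply, sumFunctional_apply, sumFunctional_apply, sum_natRep]

lemma extRep_apply (n r : ℕ) (f : Function.End (Fin n)) :
    extRep n r f = exteriorPower.map r (natRep n f) :=
  extMap_eq_exteriorPowerMap r _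

lemma extAugRep_apply (n r : ℕ) (f : Function.End (Fin n)) :
    extAugRep n r f = exteriorPower.map r ((natRep n f).restrict fun _ => natRep_mem_aug n f) :=
  extMap_eq_exteriorPowerMap r _

/-- For `1 ≤ r ≤ n` there is a short exact sequence of `ℂ[T_n]`-modules
`0 → Λ^r(V) → Λ^r(ℂ^n) → Λ^{r-1}(V) → 0`, where `V = Aug(ℂ^n)`: the inclusion
`Λ^r(V) → Λ^r(ℂ^n)` induced by `V ⊆ ℂ^n` is injective and `T_n`-equivariant, and
there is a surjective `T_n`-equivariant linear map `Λ^r(ℂ^n) → Λ^{r-1}(V)` whose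
kernel is the image of the inclusion. -/
theorem exteriorPower_short_exact_sequence (n r : ℕ) (hr : 1 ≤ r) (hrn : r ≤ n) :
    ∃ π : ↥(⋀[ℂ]^r (Fin n → ℂ)) →ₗ[ℂ] ↥(⋀[ℂ]^(r-1) ↥(Aug n)),
      Function.Injective (extMap r (Aug n).subtype) ∧
      (∀ f : Function.End (Fin n),
        (extMap r (Aug n).subtype).comp (extAugRep n r f)
          = (extRep n r f).comp (extMap r (Aug n).subtype)) ∧
      Function.Surjective π ∧
      LinearMap.range (extMap r (Aug n).subtype) = LinearMap.ker π ∧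
      (∀ f : Function.End (Fin n),
        π.comp (extRep n r f) = (extAugRep n (r-1) f).comp π) := by
  obtain ⟨k, rfl⟩ : ∃ k, r = k + 1 := ⟨r - 1, by omega⟩
  have hV := aug_eq_ker_sumFunctional n
  have hu : sumFunctional n (Pi.single ⟨0, by omega⟩ 1) = 1 := by simp [sumFunctional_apply]
  refine ⟨contractToKer hV hu k, ?_, fun f => ?_, contractToKer_surjective hV hu k, ?_,
    fun f => ?_⟩
  · rw [extMap_eq_exteriorPowerMap]
    exact map_subtype_injective hV hu (k + 1)
  · rw [extRep_apply, extAugRep_apply, extMap_eq_exteriorPowerMap]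
    exact exteriorPower.map_comp_restrict (k + 1) _ _
  · rw [extMap_eq_exteriorPowerMap]
    exact range_map_subtype_eq_ker_contractToKer hV hu k
  · rw [extRep_apply, extAugRep_apply]
    exact contractToKer_comp_map hV hu k _ _ (sumFunctional_comp_natRep n f)
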